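/- arXiv:2208.02679 — 3 statements merged into one kernel-verified Lean document; each statement's English description precedes it below -/
import Mathlib

section
/- For every ξ ∈ ℝⁿ and every τ ∈ ℂ, the characteristic determinant of the principal symbol factorizes as det(τ Iₙ − a₂(ξ)) = (τ − μ|ξ|²)^{n−1} · (τ − (2μ+λ)|ξ|²). -/
open Matrix BigOperators

/-- The principal symbol of the Navier–Lamé operator:
`a₂(ξ) = μ|ξ|² Iₙ + (μ+λ) ξξᵀ`. -/
noncomputable def a2 (n : ℕ) (μ lam : ℝ) (ξ : Fin n → ℝ) : Matrix (Fin n) (Fin n) ℝ :=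
  (μ * ∑ i, ξ i ^ 2) • (1 : Matrix (Fin n) (Fin n) ℝ) +
    (μ + lam) • Matrix.of fun j k => ξ j * ξ k

/-!
`τ Iₙ − a₂(ξ)` is the scalar matrix `(τ − μ|ξ|²) Iₙ` minus the rank-one matrix `(μ+λ) ξξᵀ`,
and a rank-one matrix `u vᵀ` has characteristic polynomial `X^{n−1} (X − u ⬝ᵥ v)`.
-/

open Polynomial in
theorem det_smul_one_sub_vecMulVec {ι R : Type*} [Fintype ι] [DecidableEq ι] [Nonempty ι]
    [CommRing R] (t : R) (u v : ι → R) :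
    (t • (1 : Matrix ι ι R) - vecMulVec u v).det = t ^ (Fintype.card ι - 1) * (t - u ⬝ᵥ v) := by
  obtain ⟨k, hk⟩ := Nat.exists_eq_add_one_of_ne_zero (Fintype.card_ne_zero (α := ι))
  rw [smul_one_eq_diagonal, ← scalar_apply, ← eval_charpoly, charpoly_vecMulVec]
  simp only [eval_sub, eval_pow, eval_X, eval_smul, smul_eq_mul]
  rw [hk, Nat.add_sub_cancel, pow_succ]
  ring

theorem a2_char_det_general (n : ℕ) (hn : 1 ≤ n) (μ lam : ℝ)
    (ξ : Fin n → ℝ) (τ : ℂ) :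
    (τ • (1 : Matrix (Fin n) (Fin n) ℂ) - (a2 n μ lam ξ).map (fun r => (r : ℂ))).det
      = (τ - ((μ * ∑ i, ξ i ^ 2 : ℝ) : ℂ)) ^ (n - 1) *
        (τ - (((2 * μ + lam) * ∑ i, ξ i ^ 2 : ℝ) : ℂ)) := by
  have : NeZero n := ⟨by omega⟩
  set ζ : Fin n → ℂ := fun i => (ξ i : ℂ)
  have hsymbol : τ • (1 : Matrix (Fin n) (Fin n) ℂ) - (a2 n μ lam ξ).map (fun r => (r : ℂ)) =
      (τ - ((μ * ∑ i, ξ i ^ 2 : ℝ) : ℂ)) • 1 - vecMulVec (((μ + lam : ℝ) : ℂ) • ζ) ζ := by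
    ext i j
    by_cases h : i = j <;> simp [a2, vecMulVec_apply, one_apply, h, ζ]; ring
  have hdot : (((μ + lam : ℝ) : ℂ) • ζ) ⬝ᵥ ζ = (((μ + lam) * ∑ i, ξ i ^ 2 : ℝ) : ℂ) := by
    simp [dotProduct, ζ, Finset.mul_sum, pow_two, mul_assoc]
  rw [hsymbol, det_smul_one_sub_vecMulVec, hdot, Fintype.card_fin]
  push_cast
  ring

/-- the characteristic determinant of the principal symbol factorizes as
det(τ Iₙ − a₂(ξ)) = (τ − μ|ξ|²)^{n−1} (τ − (2μ+λ)|ξ|²). -/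
theorem a2_char_det (n : ℕ) (hn : 1 ≤ n) (μ lam : ℝ) (hμ : 0 < μ) (hlam : 0 ≤ lam + μ)
    (ξ : Fin n → ℝ) (τ : ℂ) :
    (τ • (1 : Matrix (Fin n) (Fin n) ℂ) - (a2 n μ lam ξ).map (fun r => (r : ℂ))).det
      = (τ - ((μ * ∑ i, ξ i ^ 2 : ℝ) : ℂ)) ^ (n - 1) *
        (τ - (((2 * μ + lam) * ∑ i, ξ i ^ 2 : ℝ) : ℂ)) :=
  a2_char_det_general n hn μ lam ξ τ
end

section
/- For every ξ ∈ ℝⁿ with ξ ≠ 0 and every t ∈ ℝ, the matrix exponential of −t a₂(ξ) is given explicitly by exp(−t a₂(ξ)) = e^{−μ t |ξ|²} (Iₙ − |ξ|⁻² ξξᵀ) + e^{−(2μ+λ) t |ξ|²} |ξ|⁻² ξξᵀ. -/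
open Matrix BigOperators

/-!
With `P = |ξ|⁻² ξξᵀ` the orthogonal projection onto `ℝξ`, the symbol splits as
`a₂(ξ) = μ|ξ|² (I - P) + (2μ + λ)|ξ|² P`. For an idempotent `p` of an algebra `A`, the map
`(x, y) ↦ x • (1 - p) + y • p` is a continuous algebra homomorphism `ℝ × ℝ → A`; it commutes with
`exp`, and `exp` on `ℝ × ℝ` acts componentwise.
-/

namespace IsIdempotentElem

variable {R A : Type*} [CommRing R] [Ring A] [Algebra R A] {p : A}

def prodAlgHom (hp : IsIdempotentElem p) : R × R →ₐ[R] A where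
  toFun x := x.1 • (1 - p) + x.2 • p
  map_one' := by simp
  map_mul' x y := by
    simp only [Prod.fst_mul, Prod.snd_mul, add_mul, mul_add, smul_mul_smul_comm, hp.one_sub.eq,
      hp.one_sub_mul_self, hp.mul_one_sub_self, hp.eq, smul_zero, add_zero, zero_add]
  map_zero' := by simp
  map_add' x y := by
    simp only [Prod.fst_add, Prod.snd_add, add_smul]
    abel
  commutes' r := by simp [Algebra.algebraMap_eq_smul_one, smul_sub]

@[simp]
lemma prodAlgHom_apply (hp : IsIdempotentElem p) (x : R × R) :
    hp.prodAlgHom x = x.1 • (1 - p) + x.2 • p :=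
  rfl

open NormedSpace in
theorem exp_smul_one_sub_add_smul {A : Type*} [NormedRing A] [NormedAlgebra ℝ A] [Algebra ℚ A]
    {p : A} (hp : IsIdempotentElem p) (x y : ℝ) :
    exp (x • (1 - p) + y • p) = Real.exp x • (1 - p) + Real.exp y • p := by
  have hcont : Continuous (hp.prodAlgHom (R := ℝ)) := by
    change Continuous fun x : ℝ × ℝ => x.1 • (1 - p) + x.2 • p
    fun_prop
  simpa [Real.exp_eq_exp_ℝ] using (map_exp (hp.prodAlgHom (R := ℝ)) hcont (x, y)).symm

end IsIdempotentElem

namespace Matrix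

open NormedSpace in
theorem exp_smul_one_sub_add_smul_of_isIdempotentElem {n : Type*} [Fintype n] [DecidableEq n]
    {P : Matrix n n ℝ} (hP : IsIdempotentElem P) (x y : ℝ) :
    exp (x • (1 - P) + y • P) = Real.exp x • (1 - P) + Real.exp y • P := by
  -- `exp` only depends on the topology, so any submultiplicative norm will do.
  let _ : NormedRing (Matrix n n ℝ) := Matrix.linftyOpNormedRing
  let _ : NormedAlgebra ℝ (Matrix n n ℝ) := Matrix.linftyOpNormedAlgebra
  exact hP.exp_smul_one_sub_add_smul x y

theorem isIdempotentElem_inv_smul_vecMulVec_self {n K : Type*} [Fintype n] [Field K]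
    {v : n → K} (hv : v ⬝ᵥ v ≠ 0) : IsIdempotentElem ((v ⬝ᵥ v)⁻¹ • vecMulVec v v) := by
  rw [IsIdempotentElem, smul_mul_smul_comm, vecMulVec_mul_vecMulVec, vecMulVec_smul, smul_smul,
    inv_mul_cancel_right₀ hv]

end Matrix

theorem a2_eq_smul_one_sub_add_smul {n : ℕ} (μ lam : ℝ) {ξ : Fin n → ℝ} (hξ : ξ ⬝ᵥ ξ ≠ 0) :
    a2 n μ lam ξ = (μ * ξ ⬝ᵥ ξ) • (1 - (ξ ⬝ᵥ ξ)⁻¹ • vecMulVec ξ ξ) +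
      ((2 * μ + lam) * ξ ⬝ᵥ ξ) • ((ξ ⬝ᵥ ξ)⁻¹ • vecMulVec ξ ξ) := by
  have hsum : ∑ i, ξ i ^ 2 = ξ ⬝ᵥ ξ := by simp only [dotProduct, sq]
  have hN : vecMulVec ξ ξ = (ξ ⬝ᵥ ξ) • ((ξ ⬝ᵥ ξ)⁻¹ • vecMulVec ξ ξ) := by
    rw [smul_smul, mul_inv_cancel₀ hξ, one_smul]
  generalize (ξ ⬝ᵥ ξ)⁻¹ • vecMulVec ξ ξ = P at hN ⊢
  rw [a2, hsum, ← vecMulVec, hN]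
  module

open NormedSpace in
theorem a2_heat_symbol_general (n : ℕ) (μ lam : ℝ)
    (ξ : Fin n → ℝ) (hξ : ξ ≠ 0) (t : ℝ) :
    exp ((-t) • a2 n μ lam ξ)
      = Real.exp (-(μ * t * ∑ i, ξ i ^ 2)) •
          ((1 : Matrix (Fin n) (Fin n) ℝ) -
            (∑ i, ξ i ^ 2)⁻¹ • Matrix.of (fun j k => ξ j * ξ k)) +
        Real.exp (-((2 * μ + lam) * t * ∑ i, ξ i ^ 2)) •
          ((∑ i, ξ i ^ 2)⁻¹ • Matrix.of (fun j k => ξ j * ξ k)) := by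
  have hs : ξ ⬝ᵥ ξ ≠ 0 := dotProduct_self_eq_zero.not.mpr hξ
  have hsum : ∑ i, ξ i ^ 2 = ξ ⬝ᵥ ξ := by simp only [dotProduct, sq]
  rw [a2_eq_smul_one_sub_add_smul μ lam hs, smul_add, smul_smul, smul_smul,
    exp_smul_one_sub_add_smul_of_isIdempotentElem (isIdempotentElem_inv_smul_vecMulVec_self hs),
    hsum]
  congr 3 <;> ring

open NormedSpace in
/-- explicit formula for the matrix exponential of −t a₂(ξ), ξ ≠ 0:
exp(−t a₂(ξ)) = e^{−μt|ξ|²}(Iₙ − |ξ|⁻²ξξᵀ) + e^{−(2μ+λ)t|ξ|²}|ξ|⁻²ξξᵀ. -/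
theorem a2_heat_symbol (n : ℕ) (hn : 1 ≤ n) (μ lam : ℝ) (hμ : 0 < μ) (hlam : 0 ≤ lam + μ)
    (ξ : Fin n → ℝ) (hξ : ξ ≠ 0) (t : ℝ) :
    exp ((-t) • a2 n μ lam ξ)
      = Real.exp (-(μ * t * ∑ i, ξ i ^ 2)) •
          ((1 : Matrix (Fin n) (Fin n) ℝ) -
            (∑ i, ξ i ^ 2)⁻¹ • Matrix.of (fun j k => ξ j * ξ k)) +
        Real.exp (-((2 * μ + lam) * t * ∑ i, ξ i ^ 2)) •
          ((∑ i, ξ i ^ 2)⁻¹ • Matrix.of (fun j k => ξ j * ξ k)) :=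
  a2_heat_symbol_general n μ lam ξ hξ t
end

section
/- For every t > 0, (2π)⁻ⁿ ∫_{ℝⁿ} Tr[exp(−t a₂(ξ))] dξ = (n−1) (4πμt)^{−n/2} + (4π(2μ+λ)t)^{−n/2}. (This is the interior heat-trace density, i.e. the coefficient of Vol(Ω) in the leading term of the two-term asymptotics of Σ_k e^{−τ_k t} for the Navier–Lamé operator.) -/
/-!
The symbol splits as `a₂(ξ) = μ|ξ|² I + (μ+λ) ξξᵀ`, where `ξξᵀ` commutes with `I` and satisfies
`(ξξᵀ)² = |ξ|² ξξᵀ`. Hence `exp(-t a₂(ξ))` has trace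
`(n-1) e^{-tμ|ξ|²} + e^{-t(2μ+λ)|ξ|²}`, one shear and one pressure Gaussian. By Fubini a Gaussian
`e^{-c|ξ|²}` on `ℝⁿ` integrates to `(π/c)^{n/2}`, and `(2π)^{-n} (π/c)^{n/2} = (4πc)^{-n/2}`.
-/

open Matrix BigOperators Real

open NormedSpace MeasureTheory

namespace Matrix

variable {m R : Type*} [Fintype m] [DecidableEq m]

omit [DecidableEq m] in
theorem vecMulVec_mul_self [CommSemiring R] (u v : m → R) :
    vecMulVec u v * vecMulVec u v = (vecMulVec u v).trace • vecMulVec u v := by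
  rw [vecMulVec_mul_vecMulVec, trace_vecMulVec, dotProduct_comm]
  ext i j
  simp only [vecMulVec_apply, Pi.smul_apply, smul_apply, smul_eq_mul]
  ring

omit [DecidableEq m] in
theorem trace_vecMulVec_self [CommSemiring R] (ξ : m → R) :
    (vecMulVec ξ ξ).trace = ∑ i, ξ i ^ 2 := by
  simp [dotProduct, sq]

theorem pow_succ_of_mul_self_eq_trace_smul [CommSemiring R] {A : Matrix m m R}
    (hA : A * A = A.trace • A) (k : ℕ) : A ^ (k + 1) = A.trace ^ k • A := by
  induction k with
  | zero => simp
  | succ k ih => rw [pow_succ, ih, smul_mul, hA, smul_smul, pow_succ]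

theorem trace_pow_of_mul_self_eq_trace_smul [CommRing R] {A : Matrix m m R}
    (hA : A * A = A.trace • A) (k : ℕ) :
    (A ^ k).trace = A.trace ^ k + if k = 0 then (Fintype.card m : R) - 1 else 0 := by
  cases k with
  | zero => simp
  | succ k => simp [pow_succ_of_mul_self_eq_trace_smul hA, pow_succ]

attribute [local instance] Matrix.linftyOpNormedAddCommGroup Matrix.linftyOpNormedRing
  Matrix.linftyOpNormedAlgebra

theorem exp_smul_one_add (c : ℝ) (B : Matrix m m ℝ) :
    exp (c • (1 : Matrix m m ℝ) + B) = Real.exp c • exp B := by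
  have hscalar : exp (c • (1 : Matrix m m ℝ)) = Real.exp c • 1 := by
    have h := (algebraMap_exp_comm (𝕂 := ℝ) (𝔸 := Matrix m m ℝ) c).symm
    simp only [Algebra.algebraMap_eq_smul_one, ← Real.exp_eq_exp_ℝ] at h
    exact h
  rw [exp_add_of_commute _ _ ((Commute.one_left B).smul_left c), hscalar, smul_one_mul]

theorem trace_exp_smul_of_mul_self_eq_trace_smul {A : Matrix m m ℝ}
    (hA : A * A = A.trace • A) (b : ℝ) :
    (exp (b • A)).trace = (Fintype.card m - 1) + Real.exp (b * A.trace) := by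
  have hmatrix := (exp_series_hasSum_exp' (𝕂 := ℝ) (b • A)).mapL
    (traceLinearMap m ℝ ℝ).toContinuousLinearMap
  have hscalar := (hasSum_ite_eq 0 ((Fintype.card m : ℝ) - 1)).add
    (Real.exp_eq_exp_ℝ ▸ exp_series_hasSum_exp' (𝕂 := ℝ) (b * A.trace))
  refine hmatrix.unique (hscalar.congr_fun fun k => ?_)
  simp only [LinearMap.coe_toContinuousLinearMap', traceLinearMap_apply,
    trace_smul, smul_pow, trace_pow_of_mul_self_eq_trace_smul hA, smul_eq_mul]
  cases k <;> simp [mul_pow]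

end Matrix

theorem a2_eq_smul_one_add_smul_vecMulVec (n : ℕ) (μ lam : ℝ) (ξ : Fin n → ℝ) :
    a2 n μ lam ξ = (μ * ∑ i, ξ i ^ 2) • 1 + (μ + lam) • vecMulVec ξ ξ := rfl

theorem trace_exp_neg_smul_a2 (n : ℕ) (μ lam t : ℝ) (ξ : Fin n → ℝ) :
    (exp ((-t) • a2 n μ lam ξ)).trace
      = ((n : ℝ) - 1) * Real.exp (-(t * μ) * ∑ i, ξ i ^ 2)
        + Real.exp (-(t * (2 * μ + lam)) * ∑ i, ξ i ^ 2) := by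
  rw [a2_eq_smul_one_add_smul_vecMulVec, smul_add, smul_smul, smul_smul, exp_smul_one_add,
    trace_smul, trace_exp_smul_of_mul_self_eq_trace_smul (vecMulVec_mul_self ξ ξ),
    trace_vecMulVec_self, Fintype.card_fin, smul_eq_mul, mul_add, ← Real.exp_add]
  ring_nf

section Gaussian

variable {ι : Type*} [Fintype ι]

theorem exp_neg_mul_sum_sq (c : ℝ) (ξ : ι → ℝ) :
    Real.exp (-c * ∑ i, ξ i ^ 2) = ∏ i, Real.exp (-c * ξ i ^ 2) := by
  rw [Finset.mul_sum, Real.exp_sum]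

theorem integrable_exp_neg_mul_sum_sq {c : ℝ} (hc : 0 < c) :
    Integrable fun ξ : ι → ℝ => Real.exp (-c * ∑ i, ξ i ^ 2) := by
  simp_rw [exp_neg_mul_sum_sq]
  exact Integrable.fintype_prod fun _ => integrable_exp_neg_mul_sq hc

theorem integral_exp_neg_mul_sum_sq (c : ℝ) :
    ∫ ξ : ι → ℝ, Real.exp (-c * ∑ i, ξ i ^ 2) = √(π / c) ^ Fintype.card ι := by
  simp_rw [exp_neg_mul_sum_sq]
  rw [volume_pi, integral_fintype_prod_eq_pow (fun x : ℝ => Real.exp (-c * x ^ 2)),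
    integral_gaussian]

theorem inv_two_pi_pow_mul_sqrt_pi_div_pow {c : ℝ} (hc : 0 < c) (n : ℕ) :
    ((2 * π) ^ n)⁻¹ * √(π / c) ^ n = (4 * π * c) ^ (-(n : ℝ) / 2) := by
  have hsqrt : (2 * π)⁻¹ * √(π / c) = √((4 * π * c)⁻¹) := by
    rw [← sqrt_sq (by positivity : 0 ≤ (2 * π)⁻¹), ← sqrt_mul (by positivity)]
    congr 1
    field_simp
    ring
  rw [← inv_pow, ← mul_pow, hsqrt, sqrt_eq_rpow, ← rpow_natCast, ← rpow_mul (by positivity),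
    inv_rpow (by positivity), ← rpow_neg (by positivity)]
  ring_nf

end Gaussian

open NormedSpace in
theorem interior_heat_trace_density_general (n : ℕ) (μ lam : ℝ) (hμ : 0 < μ)
    (hlam : 0 ≤ lam + μ) (t : ℝ) (ht : 0 < t) :
    ((2 * π) ^ n)⁻¹ * (∫ ξ : Fin n → ℝ, (exp ((-t) • a2 n μ lam ξ)).trace)
      = ((n : ℝ) - 1) * (4 * π * μ * t) ^ (-(n : ℝ) / 2) +
        (4 * π * (2 * μ + lam) * t) ^ (-(n : ℝ) / 2) := by
  have hshear : 0 < t * μ := mul_pos ht hμ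
  have hpressure : 0 < t * (2 * μ + lam) := mul_pos ht (by linarith)
  simp_rw [trace_exp_neg_smul_a2]
  rw [integral_add ((integrable_exp_neg_mul_sum_sq hshear).const_mul _)
      (integrable_exp_neg_mul_sum_sq hpressure), integral_const_mul,
    integral_exp_neg_mul_sum_sq, integral_exp_neg_mul_sum_sq, Fintype.card_fin, mul_add,
    mul_left_comm, inv_two_pi_pow_mul_sqrt_pi_div_pow hshear,
    inv_two_pi_pow_mul_sqrt_pi_div_pow hpressure]
  ring_nf

open NormedSpace in
/-- the interior heat-trace density:
(2π)⁻ⁿ ∫_{ℝⁿ} Tr[exp(−t a₂(ξ))] dξ = (n−1)(4πμt)^{−n/2} + (4π(2μ+λ)t)^{−n/2}. -/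
theorem interior_heat_trace_density (n : ℕ) (hn : 1 ≤ n) (μ lam : ℝ) (hμ : 0 < μ)
    (hlam : 0 ≤ lam + μ) (t : ℝ) (ht : 0 < t) :
    ((2 * π) ^ n)⁻¹ * (∫ ξ : Fin n → ℝ, (exp ((-t) • a2 n μ lam ξ)).trace)
      = ((n : ℝ) - 1) * (4 * π * μ * t) ^ (-(n : ℝ) / 2) +
        (4 * π * (2 * μ + lam) * t) ^ (-(n : ℝ) / 2) :=
  interior_heat_trace_density_general n μ lam hμ hlam t ht
end
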